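/- Let n be a positive integer, let ρ > 0 and τ > 0 be real numbers, and let A be a real symmetric positive semidefinite n×n matrix with eigendecomposition A = U Σ Uᵀ, where U is orthogonal and Σ is diagonal with nonnegative entries. Then the infimum over all real n×n matrices L of (ρ/2)·‖A − LᵀL‖_F² + τ·‖L‖_* equals the infimum over all pairs (Γ, W), where Γ is an n×n diagonal matrix with nonnegative entries and W is an n×n orthogonal matrix, of (ρ/2)·‖Σ − W Γ² Wᵀ‖_F² + τ·trace(Γ). -/

import Mathlib

open Matrix BigOperators Finset

noncomputable def frobNormSq {m n : ℕ} (M : Matrix (Fin m) (Fin n) ℝ) : ℝ :=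
  ∑ i, ∑ j, (M i j)^2

noncomputable def singularValues {m n : ℕ} (M : Matrix (Fin m) (Fin n) ℝ) : Fin n → ℝ :=
  fun i => Real.sqrt (((by simpa only [Matrix.conjTranspose_eq_transpose_of_trivial] using Matrix.isHermitian_conjTranspose_mul_self M : (Mᵀ * M).IsHermitian)).eigenvalues i)

noncomputable def nuclearNorm {m n : ℕ} (M : Matrix (Fin m) (Fin n) ℝ) : ℝ :=
  ∑ i, singularValues M i

/-! The two sets of values coincide. Diagonalising `Lᵀ L = P diag(s²) Pᵀ`, with `s` the singular
values of `L`, and putting `W = Uᵀ P`, `Γ = diag s` turns the first objective into the second,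
because the Frobenius norm is invariant under orthogonal conjugation. Conversely `L = Γ (U W)ᵀ`
has `Lᵀ L = (U W) Γ² (U W)ᵀ`, whose eigenvalues are the `γᵢ²` as a multiset (they are the roots of
the common characteristic polynomial), so its nuclear norm is `trace Γ`. -/

namespace Matrix

variable {ι : Type*} [Fintype ι] [DecidableEq ι]

lemma transpose_mul_self_eq_one_mul {R : Type*} [CommSemiring R] {P Q : Matrix ι ι R}
    (hP : Pᵀ * P = 1) (hQ : Qᵀ * Q = 1) : (P * Q)ᵀ * (P * Q) = 1 := by
  rw [transpose_mul, Matrix.mul_assoc, ← Matrix.mul_assoc Pᵀ, hP, Matrix.one_mul, hQ]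

lemma transpose_mul_self_diagonal_mul_transpose {R : Type*} [CommSemiring R] (γ : ι → R)
    (Q : Matrix ι ι R) :
    (diagonal γ * Qᵀ)ᵀ * (diagonal γ * Qᵀ) = Q * diagonal (fun i => γ i ^ 2) * Qᵀ := by
  simp only [transpose_mul, transpose_transpose, diagonal_transpose, Matrix.mul_assoc,
    ← Matrix.mul_assoc (diagonal γ) (diagonal γ), diagonal_mul_diagonal, pow_two]

lemma IsHermitian.exists_orthogonal_diagonalization {H : Matrix ι ι ℝ} (hH : H.IsHermitian) :
    ∃ P : Matrix ι ι ℝ, Pᵀ * P = 1 ∧ H = P * diagonal hH.eigenvalues * Pᵀ := by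
  refine ⟨hH.eigenvectorUnitary, ?_, ?_⟩
  · simpa [← conjTranspose_eq_transpose_of_trivial, star_eq_conjTranspose] using
      Unitary.star_mul_self_of_mem hH.eigenvectorUnitary.2
  · simpa [Unitary.conjStarAlgAut_apply, star_eq_conjTranspose] using hH.spectral_theorem

lemma charpoly_orthogonal_conj {Q : Matrix ι ι ℝ} (hQ : Qᵀ * Q = 1) (M : Matrix ι ι ℝ) :
    (Q * M * Qᵀ).charpoly = M.charpoly := by
  rw [charpoly_mul_comm, ← Matrix.mul_assoc, hQ, Matrix.one_mul]

open Polynomial in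
lemma IsHermitian.eigenvalues_map_eq_of_eq_orthogonal_conj {H Q : Matrix ι ι ℝ}
    (hH : H.IsHermitian) (hQ : Qᵀ * Q = 1) {d : ι → ℝ} (hHd : H = Q * diagonal d * Qᵀ) :
    univ.val.map hH.eigenvalues = univ.val.map d := by
  have hchar : H.charpoly = ∏ i, (X - C (d i)) := by
    rw [hHd, charpoly_orthogonal_conj hQ, charpoly_diagonal]
  have hroots := hH.roots_charpoly_eq_eigenvalues
  rw [hchar, roots_prod _ _ (prod_ne_zero_iff.mpr fun i _ => X_sub_C_ne_zero (d i))] at hroots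
  simpa using hroots.symm

end Matrix

lemma frobNormSq_eq_trace {m n : ℕ} (M : Matrix (Fin m) (Fin n) ℝ) :
    frobNormSq M = trace (Mᵀ * M) := by
  simp only [frobNormSq, trace, Matrix.diag, mul_apply, transpose_apply, pow_two]
  exact sum_comm

lemma frobNormSq_orthogonal_conj {n : ℕ} {Q : Matrix (Fin n) (Fin n) ℝ} (hQ : Qᵀ * Q = 1)
    (M : Matrix (Fin n) (Fin n) ℝ) : frobNormSq (Q * M * Qᵀ) = frobNormSq M := by
  rw [frobNormSq_eq_trace, frobNormSq_eq_trace]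
  calc trace ((Q * M * Qᵀ)ᵀ * (Q * M * Qᵀ))
      = trace (Q * (Mᵀ * ((Qᵀ * Q) * (M * Qᵀ)))) := by
        simp only [transpose_mul, transpose_transpose, Matrix.mul_assoc]
    _ = trace (Mᵀ * M) := by
        rw [hQ, Matrix.one_mul, trace_mul_comm, Matrix.mul_assoc, Matrix.mul_assoc, hQ,
          Matrix.mul_one]

lemma singularValues_nonneg {m n : ℕ} (L : Matrix (Fin m) (Fin n) ℝ) (i : Fin n) :
    0 ≤ singularValues L i :=
  Real.sqrt_nonneg _

lemma exists_transpose_mul_self_eq_singularValues {m n : ℕ} (L : Matrix (Fin m) (Fin n) ℝ) :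
    ∃ P : Matrix (Fin n) (Fin n) ℝ, Pᵀ * P = 1 ∧
      Lᵀ * L = P * diagonal (fun i => singularValues L i ^ 2) * Pᵀ := by
  have hpsd : (Lᵀ * L).PosSemidef := by
    simpa only [conjTranspose_eq_transpose_of_trivial] using posSemidef_conjTranspose_mul_self L
  obtain ⟨P, hP, hLL⟩ := hpsd.isHermitian.exists_orthogonal_diagonalization
  refine ⟨P, hP, ?_⟩
  convert hLL using 4
  funext i
  exact Real.sq_sqrt (hpsd.eigenvalues_nonneg i)

lemma nuclearNorm_eq_sum_of_transpose_mul_self_eq {m n : ℕ} {L : Matrix (Fin m) (Fin n) ℝ}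
    {Q : Matrix (Fin n) (Fin n) ℝ} {γ : Fin n → ℝ} (hγ : ∀ i, 0 ≤ γ i) (hQ : Qᵀ * Q = 1)
    (hL : Lᵀ * L = Q * diagonal (fun i => γ i ^ 2) * Qᵀ) :
    nuclearNorm L = ∑ i, γ i := by
  have hH : (Lᵀ * L).IsHermitian := by
    simpa only [conjTranspose_eq_transpose_of_trivial] using isHermitian_conjTranspose_mul_self L
  have hspec := hH.eigenvalues_map_eq_of_eq_orthogonal_conj hQ hL
  calc nuclearNorm L = ((univ.val.map hH.eigenvalues).map Real.sqrt).sum := by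
        rw [Multiset.map_map]; rfl
    _ = ∑ i, γ i := by
        rw [hspec, Multiset.map_map, ← sum_eq_multiset_sum]
        exact sum_congr rfl fun i _ => Real.sqrt_sq (hγ i)

lemma frobNormSq_conj_sub_orthogonal_conj {n : ℕ} {U : Matrix (Fin n) (Fin n) ℝ}
    (hU : Uᵀ * U = 1) (S W D : Matrix (Fin n) (Fin n) ℝ) :
    frobNormSq (U * S * Uᵀ - (U * W) * D * (U * W)ᵀ) = frobNormSq (S - W * D * Wᵀ) := by
  have hconj : U * S * Uᵀ - (U * W) * D * (U * W)ᵀ = U * (S - W * D * Wᵀ) * Uᵀ := by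
    simp only [Matrix.mul_sub, Matrix.sub_mul, transpose_mul, Matrix.mul_assoc]
  rw [hconj, frobNormSq_orthogonal_conj hU]

theorem stmt_8_general (n : ℕ) (ρ τ : ℝ)
    (A U : Matrix (Fin n) (Fin n) ℝ) (σ : Fin n → ℝ)
    (hU : Uᵀ * U = 1)
    (hdec : A = U * Matrix.diagonal σ * Uᵀ) :
    sInf {v : ℝ | ∃ L : Matrix (Fin n) (Fin n) ℝ,
        v = ρ / 2 * frobNormSq (A - Lᵀ * L) + τ * nuclearNorm L} =
      sInf {v : ℝ | ∃ γ : Fin n → ℝ, ∃ W : Matrix (Fin n) (Fin n) ℝ,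
        (∀ i, 0 ≤ γ i) ∧ Wᵀ * W = 1 ∧
        v = ρ / 2 * frobNormSq (Matrix.diagonal σ -
              W * Matrix.diagonal (fun i => γ i ^ 2) * Wᵀ) +
            τ * Matrix.trace (Matrix.diagonal γ)} := by
  subst hdec
  have hU' : U * Uᵀ = 1 := mul_eq_one_comm.mp hU
  congr 1
  ext v
  constructor
  · rintro ⟨L, rfl⟩
    obtain ⟨P, hP, hLL⟩ := exists_transpose_mul_self_eq_singularValues L
    have hUP : U * (Uᵀ * P) = P := by rw [← Matrix.mul_assoc, hU', Matrix.one_mul]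
    refine ⟨singularValues L, Uᵀ * P, singularValues_nonneg L,
      transpose_mul_self_eq_one_mul (by rwa [transpose_transpose]) hP, ?_⟩
    have hLL' : Lᵀ * L = (U * (Uᵀ * P)) * diagonal (fun i => singularValues L i ^ 2) *
        (U * (Uᵀ * P))ᵀ := by rw [hUP, hLL]
    rw [nuclearNorm_eq_sum_of_transpose_mul_self_eq (singularValues_nonneg L) hP hLL, hLL',
      frobNormSq_conj_sub_orthogonal_conj hU, trace_diagonal]
  · rintro ⟨γ, W, hγ, hW, rfl⟩
    have hUW := transpose_mul_self_eq_one_mul hU hW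
    have hLL := transpose_mul_self_diagonal_mul_transpose γ (U * W)
    refine ⟨diagonal γ * (U * W)ᵀ, ?_⟩
    rw [nuclearNorm_eq_sum_of_transpose_mul_self_eq hγ hUW hLL, hLL,
      frobNormSq_conj_sub_orthogonal_conj hU, trace_diagonal]

/-- With A = U Σ Uᵀ, U orthogonal, Σ = diag(σ), σᵢ ≥ 0, the infimum over L
of (ρ/2)·‖A − LᵀL‖_F² + τ·‖L‖_* equals the infimum over pairs (Γ, W), Γ diagonal with
nonnegative entries and W orthogonal, of (ρ/2)·‖Σ − W Γ² Wᵀ‖_F² + τ·trace(Γ). -/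
theorem stmt_8 (n : ℕ) (hn : 0 < n) (ρ τ : ℝ) (hρ : 0 < ρ) (hτ : 0 < τ)
    (A U : Matrix (Fin n) (Fin n) ℝ) (σ : Fin n → ℝ)
    (hA : A.PosSemidef) (hU : Uᵀ * U = 1)
    (hdec : A = U * Matrix.diagonal σ * Uᵀ)
    (hσ : ∀ i, 0 ≤ σ i) :
    sInf {v : ℝ | ∃ L : Matrix (Fin n) (Fin n) ℝ,
        v = ρ / 2 * frobNormSq (A - Lᵀ * L) + τ * nuclearNorm L} =
      sInf {v : ℝ | ∃ γ : Fin n → ℝ, ∃ W : Matrix (Fin n) (Fin n) ℝ,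
        (∀ i, 0 ≤ γ i) ∧ Wᵀ * W = 1 ∧
        v = ρ / 2 * frobNormSq (Matrix.diagonal σ -
              W * Matrix.diagonal (fun i => γ i ^ 2) * Wᵀ) +
            τ * Matrix.trace (Matrix.diagonal γ)} :=
  stmt_8_general n ρ τ A U σ hU hdec
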